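/- arXiv:math/9911183 — 3 statements merged into one kernel-verified Lean document; each statement's English description precedes it below -/
import Mathlib

section
/- Let Q be a proximity matrix and ε a branch vector for Q, with T the associated intersection matrix and f the fiber vector. Then fᵀ T f = −2, (T f)_1 = ε_1 − 2, and (T f)_k = 0 for every k > 1. (These are the numerical properties of the fiber cycle F = π*(E_1*) of the canonical resolution of a double point: F² = −2 = −mult_p(X_0), F·F_1 = −2 + ε_1, and F·F_i = 0 for i > 1.) -/
open Matrix Finset

/-- A proximity matrix: strictly upper triangular with entries `0` or `1`. -/
def IsProxMat {n : ℕ} (Q : Matrix (Fin n) (Fin n) ℤ) : Prop :=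
  (∀ i j : Fin n, ¬ i < j → Q i j = 0) ∧ (∀ i j : Fin n, Q i j = 0 ∨ Q i j = 1)

/-- `M = N⁻¹ = 1 + Q + ⋯ + Q^(n-1)`. -/
def Mmat {n : ℕ} (Q : Matrix (Fin n) (Fin n) ℤ) : Matrix (Fin n) (Fin n) ℤ :=
  ∑ k ∈ Finset.range n, Q ^ k

/-- The intersection matrix `S = -(1-Q)(1-Q)ᵀ` of the exceptional curves. -/
def Smat {n : ℕ} (Q : Matrix (Fin n) (Fin n) ℤ) : Matrix (Fin n) (Fin n) ℤ :=
  -((1 - Q) * (1 - Q)ᵀ)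

/-- The Enriques axioms (E1)–(E4) for a proximity matrix. -/
def EnriquesAxioms {n : ℕ} (Q : Matrix (Fin n) (Fin n) ℤ) : Prop :=
  (∀ j : Fin n, 0 < j.val → ∃ i : Fin n, i < j ∧ Q i j = 1) ∧
  (∀ j : Fin n, (Finset.univ.filter fun i => Q i j = 1).card ≤ 2) ∧
  (∀ i j k : Fin n, i < j → Q i k = 1 → Q j k = 1 → Q i j = 1) ∧
  (∀ i j : Fin n, i < j → ∀ k k' : Fin n,
    Q i k = 1 → Q j k = 1 → Q i k' = 1 → Q j k' = 1 → k = k')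

/-- A branch vector for `Q`: each `ε i ∈ {0,1}`, and `s_{ij}` is even whenever
`ε_i = ε_j = 1`. -/
def IsBranchVec {n : ℕ} (Q : Matrix (Fin n) (Fin n) ℤ) (ε : Fin n → ℤ) : Prop :=
  (∀ i, ε i = 0 ∨ ε i = 1) ∧ ∀ i j, ε i = 1 → ε j = 1 → 2 ∣ Smat Q i j

/-- The intersection matrix `T_{ij} = (2 - ε_i)(2 - ε_j) s_{ij} / 2` of the
exceptional curves `F_i` of the canonical resolution. -/
def Tmat {n : ℕ} (Q : Matrix (Fin n) (Fin n) ℤ) (ε : Fin n → ℤ) :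
    Matrix (Fin n) (Fin n) ℤ :=
  fun i j => (2 - ε i) * (2 - ε j) * Smat Q i j / 2

/-- The fiber vector `f_i = (1 + ε_i) m_{1i}` (with first blown-up point `i0`). -/
def fiberVec {n : ℕ} (Q : Matrix (Fin n) (Fin n) ℤ) (ε : Fin n → ℤ) (i0 : Fin n) :
    Fin n → ℤ :=
  fun i => (1 + ε i) * Mmat Q i0 i

/-- `z` is the fundamental cycle for the intersection matrix `T`: the
componentwise-least vector with `z_i ≥ 1` for all `i` and `(T z)_k ≤ 0` for all `k`. -/
def IsFundCycle {n : ℕ} (T : Matrix (Fin n) (Fin n) ℤ) (z : Fin n → ℤ) : Prop :=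
  (∀ i, 1 ≤ z i) ∧ (∀ k, (T *ᵥ z) k ≤ 0) ∧
  ∀ w : Fin n → ℤ, (∀ i, 1 ≤ w i) → (∀ k, (T *ᵥ w) k ≤ 0) → z ≤ w

/-!
Write `N = 1 - Q`. Since `Q` is strictly upper triangular it is nilpotent, so `M N = 1` and hence
`S Mᵀ = -N (M N)ᵀ = -N`. Because `(2 - ε)(1 + ε) = 2` for `ε ∈ {0, 1}`, the factors `2 - ε_j`
in `T` cancel against the factors `1 + ε_j` in `f`, which gives `(T f)_k = (2 - ε_k) (S Mᵀ)_{k1}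
= -(2 - ε_k) N_{k1}`. The first column of `N` is the first unit vector, so `T f = (ε_1 - 2) e_1`,
and `fᵀ T f = (1 + ε_1)(ε_1 - 2) = -2`.
-/

section StrictlyUpperTriangular

variable {R : Type*} [Semiring R] {n : ℕ} {Q : Matrix (Fin n) (Fin n) R}

theorem pow_apply_eq_zero_of_lt_add (hQ : ∀ i j, ¬ i < j → Q i j = 0) (k : ℕ) {i j : Fin n}
    (hij : j.val < i.val + k) : (Q ^ k) i j = 0 := by
  induction k generalizing j with
  | zero => exact one_apply_ne (by rintro rfl; omega)
  | succ k ih =>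
    rw [pow_succ, mul_apply]
    refine sum_eq_zero fun l _ => ?_
    by_cases hl : l.val < i.val + k
    · rw [ih hl, zero_mul]
    · rw [hQ l j (by rw [Fin.lt_def]; omega), mul_zero]

theorem pow_card_eq_zero_of_strictUpper (hQ : ∀ i j, ¬ i < j → Q i j = 0) : Q ^ n = 0 := by
  ext i j
  exact pow_apply_eq_zero_of_lt_add hQ n (by omega)

end StrictlyUpperTriangular

section ProximityMatrix

variable {n : ℕ} {Q : Matrix (Fin n) (Fin n) ℤ} {ε : Fin n → ℤ}

theorem Mmat_mul_one_sub (hQ : Q ^ n = 0) : Mmat Q * (1 - Q) = 1 := by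
  rw [Mmat, geom_sum_mul_neg, hQ, sub_zero]

theorem Smat_mul_transpose_Mmat (hQ : Q ^ n = 0) : Smat Q * (Mmat Q)ᵀ = -(1 - Q) := by
  rw [Smat, neg_mul, Matrix.mul_assoc, ← transpose_mul, Mmat_mul_one_sub hQ, transpose_one,
    Matrix.mul_one]

theorem Mmat_apply_self_of_col_eq_zero (hQ : Q ^ n = 0) {i0 : Fin n} (hcol : ∀ k, Q k i0 = 0) :
    Mmat Q i0 i0 = 1 := by
  have h := congrFun (congrFun (Mmat_mul_one_sub hQ) i0) i0
  simpa [mul_apply, Matrix.sub_apply, one_apply, hcol] using h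

theorem Tmat_mul_one_add (hε : IsBranchVec Q ε) (k j : Fin n) :
    Tmat Q ε k j * (1 + ε j) = (2 - ε k) * Smat Q k j := by
  have hdvd := hε.2 k j
  rcases hε.1 k with hk | hk <;> rcases hε.1 j with hj | hj <;>
    norm_num [Tmat, hk, hj] at hdvd ⊢ <;> omega

theorem Tmat_mulVec_fiberVec_apply (hε : IsBranchVec Q ε) (i0 k : Fin n) :
    (Tmat Q ε *ᵥ fiberVec Q ε i0) k = (2 - ε k) * (Smat Q * (Mmat Q)ᵀ) k i0 := by
  simp only [mulVec, dotProduct, fiberVec, mul_apply, transpose_apply, mul_sum]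
  refine sum_congr rfl fun j _ => ?_
  rw [← mul_assoc, Tmat_mul_one_add hε, mul_assoc]

theorem Tmat_mulVec_fiberVec_of_col_eq_zero (hQ : Q ^ n = 0) (hε : IsBranchVec Q ε) {i0 : Fin n}
    (hcol : ∀ k, Q k i0 = 0) : Tmat Q ε *ᵥ fiberVec Q ε i0 = Pi.single i0 (ε i0 - 2) := by
  ext k
  rw [Tmat_mulVec_fiberVec_apply hε, Smat_mul_transpose_Mmat hQ]
  by_cases hk : k = i0 <;> simp [hk, hcol]

end ProximityMatrix

/-- Numerical properties of the fiber cycle `F = π*(E₁*)` of the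
canonical resolution of a double point: `F² = fᵀ T f = -2`, `F·F₁ = (Tf)_1 = ε_1 - 2`,
and `F·F_k = (Tf)_k = 0` for `k > 1`. -/
theorem fiber_cycle_numerics
    (n : ℕ) (hn : 1 ≤ n) (Q : Matrix (Fin n) (Fin n) ℤ)
    (hQ : IsProxMat Q) (ε : Fin n → ℤ) (hε : IsBranchVec Q ε) :
    fiberVec Q ε ⟨0, hn⟩ ⬝ᵥ (Tmat Q ε *ᵥ fiberVec Q ε ⟨0, hn⟩) = -2 ∧
    (Tmat Q ε *ᵥ fiberVec Q ε ⟨0, hn⟩) ⟨0, hn⟩ = ε ⟨0, hn⟩ - 2 ∧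
    ∀ k : Fin n, k ≠ ⟨0, hn⟩ → (Tmat Q ε *ᵥ fiberVec Q ε ⟨0, hn⟩) k = 0 := by
  have hQn : Q ^ n = 0 := pow_card_eq_zero_of_strictUpper hQ.1
  have hcol : ∀ k, Q k ⟨0, hn⟩ = 0 := fun k => hQ.1 k _ (by simp [Fin.lt_def])
  rw [Tmat_mulVec_fiberVec_of_col_eq_zero hQn hε hcol]
  refine ⟨?_, Pi.single_eq_same _ _, fun k hk => Pi.single_eq_of_ne hk _⟩
  rw [dotProduct_single, fiberVec, Mmat_apply_self_of_col_eq_zero hQn hcol, mul_one]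
  rcases hε.1 ⟨0, hn⟩ with h | h <;> rw [h] <;> norm_num
end

section
/- Let Q be a proximity matrix and ε a branch vector for Q. If an index j > 1 satisfies the three conditions: ε_j = 0, q_j is infinitely near of order one to q_1, and m_{1i} + m_{ji} is even for every i with ε_i = 0, then necessarily ε_1 = 1 (so the multiplicity of the branch curve at q_1 is odd), and j is the unique index satisfying these three conditions. -/
open Matrix Finset

/-!
`M = 1 + Q + ⋯ + Q^{n-1}` is upper unitriangular, and when the only nonzero entry of column `k`
of `Q` is `q_{1k} = 1`, the relation `M = 1 + M Q` gives `m_{ak} = δ_{ak} + m_{a1}`.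
Hence `m_{11} + m_{j1} = 1` is odd, so the parity condition at `i = 1` rules out `ε_1 = 0`;
and for another index `j' ≠ j` infinitely near of order one to `q_1`,
`m_{1j'} + m_{jj'} = 1 + 0` is odd, so the parity condition at `i = j'` rules out `ε_{j'} = 0`.
-/

theorem pow_apply_eq_zero_of_lt_add_s6 {R : Type*} [Semiring R] {n : ℕ}
    {Q : Matrix (Fin n) (Fin n) R} (hQ : ∀ i j : Fin n, ¬ i < j → Q i j = 0) (k : ℕ) (a b : Fin n)
    (hab : (b : ℕ) < a + k) : (Q ^ k) a b = 0 := by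
  induction k generalizing a with
  | zero => exact one_apply_ne (by rintro rfl; omega)
  | succ k ih =>
    rw [pow_succ', mul_apply]
    refine sum_eq_zero fun c _ => ?_
    by_cases hac : a < c
    · rw [ih c (by rw [Fin.lt_def] at hac; omega), mul_zero]
    · rw [hQ a c hac, zero_mul]

theorem pow_card_eq_zero {R : Type*} [Semiring R] {n : ℕ} {Q : Matrix (Fin n) (Fin n) R}
    (hQ : ∀ i j : Fin n, ¬ i < j → Q i j = 0) : Q ^ n = 0 := by
  ext a b
  exact pow_apply_eq_zero_of_lt_add_s6 hQ n a b (by omega)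

theorem Mmat_eq_one_add_Mmat_mul {n : ℕ} {Q : Matrix (Fin n) (Fin n) ℤ}
    (hQ : ∀ i j : Fin n, ¬ i < j → Q i j = 0) : Mmat Q = 1 + Mmat Q * Q := by
  have h : Mmat Q * (1 - Q) = 1 := by
    rw [Mmat, geom_sum_mul_neg, pow_card_eq_zero hQ, sub_zero]
  rwa [mul_sub, mul_one, sub_eq_iff_eq_add] at h

theorem Mmat_apply_of_le {n : ℕ} {Q : Matrix (Fin n) (Fin n) ℤ}
    (hQ : ∀ i j : Fin n, ¬ i < j → Q i j = 0) {a b : Fin n} (hba : b ≤ a) :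
    Mmat Q a b = (1 : Matrix (Fin n) (Fin n) ℤ) a b := by
  rw [Mmat, Matrix.sum_apply, sum_eq_single 0]
  · rfl
  · exact fun k _ hk => pow_apply_eq_zero_of_lt_add_s6 hQ k a b (by rw [Fin.le_def] at hba; omega)
  · exact fun h => absurd (mem_range.2 (Fin.pos a)) h

theorem Mmat_apply_of_col_eq_single {n : ℕ} {Q : Matrix (Fin n) (Fin n) ℤ}
    (hQ : ∀ i j : Fin n, ¬ i < j → Q i j = 0) {i₀ k : Fin n} (hk : Q i₀ k = 1)
    (hk' : ∀ i : Fin n, i ≠ i₀ → Q i k = 0) (a : Fin n) :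
    Mmat Q a k = (1 : Matrix (Fin n) (Fin n) ℤ) a k + Mmat Q a i₀ := by
  conv_lhs => rw [Mmat_eq_one_add_Mmat_mul hQ]
  rw [Matrix.add_apply, mul_apply, sum_eq_single i₀, hk, mul_one]
  · exact fun c _ hc => by rw [hk' c hc, mul_zero]
  · exact fun h => absurd (mem_univ i₀) h

theorem exceptional_index_forces_branched_and_unique_general
    (n : ℕ) (hn : 1 ≤ n) (Q : Matrix (Fin n) (Fin n) ℤ)
    (hQ : IsProxMat Q) (ε : Fin n → ℤ) (hε : IsBranchVec Q ε)
    (j : Fin n) (hj0 : j ≠ ⟨0, hn⟩)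
    (hj3 : ∀ i : Fin n, ε i = 0 → 2 ∣ (Mmat Q ⟨0, hn⟩ i + Mmat Q j i)) :
    ε ⟨0, hn⟩ = 1 ∧
    ∀ j' : Fin n, j' ≠ ⟨0, hn⟩ → ε j' = 0 →
      (Q ⟨0, hn⟩ j' = 1 ∧ ∀ i : Fin n, i ≠ ⟨0, hn⟩ → Q i j' = 0) →
      (∀ i : Fin n, ε i = 0 → 2 ∣ (Mmat Q ⟨0, hn⟩ i + Mmat Q j' i)) →
      j' = j := by
  set i₀ : Fin n := ⟨0, hn⟩
  have hM₀₀ : Mmat Q i₀ i₀ = 1 := by rw [Mmat_apply_of_le hQ.1 le_rfl, one_apply_eq]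
  have hMj₀ : Mmat Q j i₀ = 0 := by
    rw [Mmat_apply_of_le hQ.1 (Fin.le_def.2 j.val.zero_le), one_apply_ne hj0]
  refine ⟨(hε.1 i₀).resolve_left fun h₀ => ?_, fun j' _ hj'ε hj'Q _ => ?_⟩
  · have h := hj3 i₀ h₀
    rw [hM₀₀, hMj₀] at h
    omega
  · by_contra hne
    have hi₀j' : i₀ ≠ j' := by
      rintro rfl
      simp [hQ.1 i₀ i₀ (lt_irrefl i₀)] at hj'Q
    have h := hj3 j' hj'ε
    rw [Mmat_apply_of_col_eq_single hQ.1 hj'Q.1 hj'Q.2, one_apply_ne hi₀j', hM₀₀,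
      Mmat_apply_of_col_eq_single hQ.1 hj'Q.1 hj'Q.2, one_apply_ne (Ne.symm hne), hMj₀] at h
    omega

/-- If `j > 1` satisfies `ε_j = 0`, `q_j` infinitely near of order
one to `q_1`, and `m_{1i} + m_{ji}` even for every `i` with `ε_i = 0`, then
necessarily `ε_1 = 1` (the multiplicity of the branch curve at `q_1` is odd),
and `j` is the unique index with these three properties. -/
theorem exceptional_index_forces_branched_and_unique
    (n : ℕ) (hn : 1 ≤ n) (Q : Matrix (Fin n) (Fin n) ℤ)
    (hQ : IsProxMat Q) (ε : Fin n → ℤ) (hε : IsBranchVec Q ε)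
    (j : Fin n) (hj0 : j ≠ ⟨0, hn⟩) (hj1 : ε j = 0)
    (hj2 : Q ⟨0, hn⟩ j = 1 ∧ ∀ i : Fin n, i ≠ ⟨0, hn⟩ → Q i j = 0)
    (hj3 : ∀ i : Fin n, ε i = 0 → 2 ∣ (Mmat Q ⟨0, hn⟩ i + Mmat Q j i)) :
    ε ⟨0, hn⟩ = 1 ∧
    ∀ j' : Fin n, j' ≠ ⟨0, hn⟩ → ε j' = 0 →
      (Q ⟨0, hn⟩ j' = 1 ∧ ∀ i : Fin n, i ≠ ⟨0, hn⟩ → Q i j' = 0) →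
      (∀ i : Fin n, ε i = 0 → 2 ∣ (Mmat Q ⟨0, hn⟩ i + Mmat Q j' i)) →
      j' = j :=
  exceptional_index_forces_branched_and_unique_general n hn Q hQ ε hε j hj0 hj3
end

section
/- Let Q be a proximity matrix satisfying the Enriques axioms (E1)–(E4) and ε a branch vector for Q; let z be the fundamental cycle. If ε_k = 1 and s_{kk} = −2 (so F_k is a (−1)-curve of the canonical resolution), then z_k = ∑_{i ≠ k, s_{ik} = 1} z_i, i.e. the coefficient of the fundamental cycle at F_k equals the sum of its coefficients at the exceptional curves meeting F_k. -/
/-!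
Since `ε_k = 1`, the branch-vector parity condition kills `T_{ik}` for every other branch
curve `F_i`, so column `k` of `T` is `-1` on the diagonal and `s_{ik} ∈ {0, 1}` off it;
hence `(T z)_k = -z_k + ∑_{s_{ik} = 1} z_i ≤ 0`. If this inequality were strict with
`z_k ≥ 2`, then `z - e_k` would still satisfy both defining conditions of the fundamental
cycle, contradicting minimality. The remaining case `z_k = 1` is settled by the fact that
a curve with `s_{kk} = -2` meets some other curve.
-/

open Matrix Finset

/-- Minimality of the fundamental cycle: lowering `z` at `k` must break `(T z)_k ≤ 0`. -/
theorem IsFundCycle.diag_lt_mulVec_apply {n : ℕ} {T : Matrix (Fin n) (Fin n) ℤ} {z : Fin n → ℤ}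
    (hz : IsFundCycle T z) {k : Fin n} (hzk : 1 < z k) (hcol : ∀ l, l ≠ k → 0 ≤ T l k) :
    T k k < (T *ᵥ z) k := by
  by_contra! hle
  set w := z - Pi.single k 1
  have hTw : ∀ l, (T *ᵥ w) l = (T *ᵥ z) l - T l k := fun l => by
    simp [w, Matrix.mulVec_sub]
  have hw_pos : ∀ i, 1 ≤ w i := fun i => by
    rcases eq_or_ne i k with rfl | hik
    · simp only [w, Pi.sub_apply, Pi.single_eq_same]
      omega
    · simpa [w, hik] using hz.1 i
  have hTw_nonpos : ∀ l, (T *ᵥ w) l ≤ 0 := fun l => by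
    rw [hTw]
    rcases eq_or_ne l k with rfl | hlk
    · omega
    · linarith [hz.2.1 l, hcol l hlk]
  have := hz.2.2 w hw_pos hTw_nonpos k
  simp [w] at this

variable {n : ℕ} {Q : Matrix (Fin n) (Fin n) ℤ}

namespace IsProxMat

variable (hQ : IsProxMat Q)
include hQ

theorem apply_eq_zero_of_le {i j : Fin n} (h : j ≤ i) : Q i j = 0 :=
  hQ.1 i j (not_lt.2 h)

theorem lt_of_apply_eq_one {i j : Fin n} (h : Q i j = 1) : i < j := by
  by_contra hij
  simp [hQ.1 i j hij] at h

theorem mul_self_apply (i j : Fin n) : Q i j * Q i j = Q i j := by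
  rcases hQ.2 i j with h | h <;> simp [h]

theorem apply_nonneg (i j : Fin n) : 0 ≤ Q i j := by
  rcases hQ.2 i j with h | h <;> simp [h]

theorem mul_apply_eq_zero {i j m : Fin n} (h : ¬(Q i m = 1 ∧ Q j m = 1)) :
    Q i m * Q j m = 0 := by
  rcases hQ.2 i m with h₁ | h₁ <;> rcases hQ.2 j m with h₂ | h₂ <;> simp_all

end IsProxMat

theorem Smat_apply (Q : Matrix (Fin n) (Fin n) ℤ) (i j : Fin n) :
    Smat Q i j = Q i j + Q j i - (1 : Matrix (Fin n) (Fin n) ℤ) i j - ∑ l, Q i l * Q j l := by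
  have hS : Smat Q = Q + Qᵀ - 1 - Q * Qᵀ := by
    simp only [Smat, transpose_sub, transpose_one, sub_mul, mul_sub, one_mul, mul_one]
    abel
  simp [hS, mul_apply]

theorem Smat_symm (Q : Matrix (Fin n) (Fin n) ℤ) (i j : Fin n) : Smat Q i j = Smat Q j i := by
  have h : (Smat Q).IsSymm := by
    unfold Smat
    exact (isSymm_mul_transpose_self (1 - Q)).neg
  exact h.apply j i

/-- (E3) and (E4): two distinct points share at most one proximate point, and if they
share one they are proximate to each other, which cancels the contribution of `Q Qᵀ`. -/
theorem Smat_apply_of_lt (hQ : IsProxMat Q) (hE : EnriquesAxioms Q) {i j : Fin n}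
    (hij : i < j) : Smat Q i j = 0 ∨ Smat Q i j = 1 := by
  rw [Smat_apply, one_apply_ne hij.ne, hQ.apply_eq_zero_of_le hij.le]
  by_cases hshared : ∃ l, Q i l = 1 ∧ Q j l = 1
  · obtain ⟨l, hil, hjl⟩ := hshared
    have hsum : ∑ m, Q i m * Q j m = 1 := by
      rw [Finset.sum_eq_single l]
      · simp [hil, hjl]
      · exact fun m _ hml => hQ.mul_apply_eq_zero fun ⟨him, hjm⟩ =>
          hml (hE.2.2.2 i j hij m l him hjm hil hjl)
      · simp
    left
    rw [hsum, hE.2.2.1 i j l hij hil hjl]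
    norm_num
  · have hsum : ∑ m, Q i m * Q j m = 0 :=
      Finset.sum_eq_zero fun m _ => hQ.mul_apply_eq_zero fun hm => hshared ⟨m, hm⟩
    rw [hsum]
    simpa using hQ.2 i j

theorem Smat_apply_of_ne (hQ : IsProxMat Q) (hE : EnriquesAxioms Q) {i j : Fin n}
    (hij : i ≠ j) : Smat Q i j = 0 ∨ Smat Q i j = 1 := by
  rcases hij.lt_or_gt with h | h
  · exact Smat_apply_of_lt hQ hE h
  · rw [Smat_symm]
    exact Smat_apply_of_lt hQ hE h

theorem Smat_apply_self (hQ : IsProxMat Q) (k : Fin n) : Smat Q k k = -1 - ∑ l, Q k l := by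
  simp only [Smat_apply, hQ.mul_self_apply, one_apply_eq, hQ.apply_eq_zero_of_le le_rfl]
  ring

/-- `s_{kk} = -2` means that exactly one point `j` is proximate to `k`, and then `F_k`
meets `F_j`. -/
theorem exists_Smat_eq_one_of_Smat_self_eq_neg_two (hQ : IsProxMat Q) {k : Fin n}
    (hk : Smat Q k k = -2) : ∃ j, j ≠ k ∧ Smat Q j k = 1 := by
  have hrow : ∑ l, Q k l = 1 := by linarith [Smat_apply_self hQ k]
  obtain ⟨j, -, hkj⟩ := Finset.exists_ne_zero_of_sum_ne_zero (by rw [hrow]; norm_num)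
  have hkj : Q k j = 1 := (hQ.2 k j).resolve_left hkj
  have hrest : ∑ l ∈ univ.erase j, Q k l = 0 := by
    linarith [Finset.add_sum_erase univ (Q k) (mem_univ j)]
  have hother : ∀ l, l ≠ j → Q k l = 0 := fun l hlj =>
    (Finset.sum_eq_zero_iff_of_nonneg (fun m _ => hQ.apply_nonneg k m)).1 hrest l
      (mem_erase.2 ⟨hlj, mem_univ l⟩)
  have hlt : k < j := hQ.lt_of_apply_eq_one hkj
  have hshared : ∑ l, Q k l * Q j l = 0 := Finset.sum_eq_zero fun l _ => by
    rcases eq_or_ne l j with rfl | hlj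
    · simp [hQ.apply_eq_zero_of_le le_rfl]
    · simp [hother l hlj]
  refine ⟨j, hlt.ne', ?_⟩
  rw [Smat_symm, Smat_apply, hkj, hQ.apply_eq_zero_of_le hlt.le, one_apply_ne hlt.ne, hshared]
  norm_num

theorem Tmat_symm (Q : Matrix (Fin n) (Fin n) ℤ) (ε : Fin n → ℤ) (i j : Fin n) :
    Tmat Q ε i j = Tmat Q ε j i := by
  simp only [Tmat, Smat_symm Q i j, mul_comm (2 - ε i)]

section MinusOneCurve

variable {ε : Fin n → ℤ} {k : Fin n} (hk1 : ε k = 1)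
include hk1

theorem Tmat_apply_self_of_Smat_self_eq_neg_two (hk2 : Smat Q k k = -2) :
    Tmat Q ε k k = -1 := by
  simp [Tmat, hk1, hk2]

/-- A nonzero `s_{ik}` between two curves with `ε = 1` is even, hence `0` here. -/
theorem Tmat_apply_of_ne (hQ : IsProxMat Q) (hE : EnriquesAxioms Q) (hε : IsBranchVec Q ε)
    {i : Fin n} (hik : i ≠ k) : Tmat Q ε i k = Smat Q i k := by
  rcases hε.1 i with hi | hi
  · simp only [Tmat, hi, hk1]
    omega
  · have hS : Smat Q i k = 0 := by
      rcases Smat_apply_of_ne hQ hE hik with h | h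
      · exact h
      · simpa [h] using hε.2 i k hi hk1
    simp [Tmat, hS]

theorem Tmat_mulVec_apply_of_Smat_self_eq_neg_two (hQ : IsProxMat Q) (hE : EnriquesAxioms Q)
    (hε : IsBranchVec Q ε) (hk2 : Smat Q k k = -2) (v : Fin n → ℤ) :
    (Tmat Q ε *ᵥ v) k = -v k + ∑ i ∈ univ.filter (fun i => i ≠ k ∧ Smat Q i k = 1), v i := by
  have hterm : ∀ i ∈ univ.erase k, Tmat Q ε k i * v i =
      if i ≠ k ∧ Smat Q i k = 1 then v i else 0 := fun i hi => by
    have hik := (mem_erase.1 hi).1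
    rw [Tmat_symm, Tmat_apply_of_ne hk1 hQ hE hε hik]
    rcases Smat_apply_of_ne hQ hE hik with h | h <;> simp [h, hik]
  rw [mulVec, dotProduct, ← Finset.add_sum_erase univ _ (mem_univ k),
    Tmat_apply_self_of_Smat_self_eq_neg_two hk1 hk2, Finset.sum_congr rfl hterm,
    Finset.sum_erase _ (by simp), ← Finset.sum_filter]
  ring

end MinusOneCurve

theorem fundamental_cycle_coeff_at_minus_one_curve_general
    (n : ℕ) (Q : Matrix (Fin n) (Fin n) ℤ)
    (hQ : IsProxMat Q) (hE : EnriquesAxioms Q)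
    (ε : Fin n → ℤ) (hε : IsBranchVec Q ε)
    (z : Fin n → ℤ) (hz : IsFundCycle (Tmat Q ε) z)
    (k : Fin n) (hk1 : ε k = 1) (hk2 : Smat Q k k = -2) :
    z k = ∑ i ∈ Finset.univ.filter (fun i : Fin n => i ≠ k ∧ Smat Q i k = 1), z i := by
  have hTz := Tmat_mulVec_apply_of_Smat_self_eq_neg_two hk1 hQ hE hε hk2 z
  set F := univ.filter fun i : Fin n => i ≠ k ∧ Smat Q i k = 1
  have hsum_le : ∑ i ∈ F, z i ≤ z k := by linarith [hz.2.1 k]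
  obtain ⟨j, hjk, hj⟩ := exists_Smat_eq_one_of_Smat_self_eq_neg_two hQ hk2
  have hsum_pos : 1 ≤ ∑ i ∈ F, z i :=
    (hz.1 j).trans <| Finset.single_le_sum (fun i _ => zero_le_one.trans (hz.1 i))
      (mem_filter.2 ⟨mem_univ j, hjk, hj⟩)
  rcases (hz.1 k).eq_or_lt with hzk | hzk
  · omega
  · have hcol : ∀ l, l ≠ k → 0 ≤ Tmat Q ε l k := fun l hlk => by
      rw [Tmat_apply_of_ne hk1 hQ hE hε hlk]
      rcases Smat_apply_of_ne hQ hE hlk with h | h <;> omega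
    have := hz.diag_lt_mulVec_apply hzk hcol
    rw [Tmat_apply_self_of_Smat_self_eq_neg_two hk1 hk2] at this
    omega

/-- If `ε_k = 1` and `s_{kk} = -2` (so `F_k` is a `(-1)`-curve of the
canonical resolution), then the coefficient of the fundamental cycle at `F_k` is the
sum of its coefficients at the exceptional curves meeting `F_k`:
`z_k = ∑_{i ≠ k, s_{ik} = 1} z_i`. -/
theorem fundamental_cycle_coeff_at_minus_one_curve
    (n : ℕ) (hn : 1 ≤ n) (Q : Matrix (Fin n) (Fin n) ℤ)
    (hQ : IsProxMat Q) (hE : EnriquesAxioms Q)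
    (ε : Fin n → ℤ) (hε : IsBranchVec Q ε)
    (z : Fin n → ℤ) (hz : IsFundCycle (Tmat Q ε) z)
    (k : Fin n) (hk1 : ε k = 1) (hk2 : Smat Q k k = -2) :
    z k = ∑ i ∈ Finset.univ.filter (fun i : Fin n => i ≠ k ∧ Smat Q i k = 1), z i :=
  fundamental_cycle_coeff_at_minus_one_curve_general n Q hQ hE ε hε z hz k hk1 hk2
end
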